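/- Let n ≥ 1, a > 0, let ω₁,…,ωₙ > 0 be pairwise distinct, and let Π > 0 be such that ωᵢΠ ∈ 2π·ℤ_{>0} for every i. Let H be a symmetric real n×n matrix, θ* ∈ ℝⁿ, J* ∈ ℝ, and J(θ) := J* + (1/2)(θ − θ*)ᵀH(θ − θ*). Define S(τ) ∈ ℝⁿ by S_i(τ) := a sin(ωᵢτ). Then for every θ̃ ∈ ℝⁿ, (1/Π) ∫₀^Π J(θ̃ + θ* + S(τ)) dτ = J(θ̃ + θ*) + (a²/4)·Tr(H). -/
import Mathlib


noncomputable section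
open Matrix intervalIntegral

lemma intcos (c P : ℝ) (m : ℤ) (h : c * P = 2 * Real.pi * m) :
    ∫ τ in (0:ℝ)..P, Real.cos (c * τ) = if c = 0 then P else 0 := by
  by_cases hc : c = 0
  · simp [hc]
  · rw [if_neg hc, integral_comp_mul_left _ hc, mul_zero, integral_cos, h]
    have : Real.sin (2 * Real.pi * m) = 0 := by
      have := Real.sin_int_mul_pi (2 * m)
      push_cast at this ⊢
      rw [show (2:ℝ) * Real.pi * m = 2 * m * Real.pi by ring, this]
    simp [this]

lemma intsin (c P : ℝ) (hc : c ≠ 0) (m : ℤ) (h : c * P = 2 * Real.pi * m) :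
    ∫ τ in (0:ℝ)..P, Real.sin (c * τ) = 0 := by
  rw [integral_comp_mul_left _ hc, mul_zero, integral_sin, h]
  have : Real.cos (2 * Real.pi * m) = 1 := by
    have := Real.cos_int_mul_two_pi m
    rw [show (2:ℝ) * Real.pi * m = m * (2*Real.pi) by ring, this]
  simp [this]

lemma intsinsin (c d P : ℝ) (hcd : c + d ≠ 0) (mc md : ℤ)
    (h1 : c * P = 2 * Real.pi * mc) (h2 : d * P = 2 * Real.pi * md) :
    ∫ τ in (0:ℝ)..P, Real.sin (c * τ) * Real.sin (d * τ)
      = if c = d then P / 2 else 0 := by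
  have key : ∀ τ : ℝ, Real.sin (c * τ) * Real.sin (d * τ)
      = (Real.cos ((c - d) * τ) - Real.cos ((c + d) * τ)) / 2 := by
    intro τ
    rw [show (c - d) * τ = c*τ - d*τ by ring, show (c + d) * τ = c*τ + d*τ by ring,
      Real.cos_sub, Real.cos_add]
    ring
  simp only [key]
  have i1 : (c - d) * P = 2 * Real.pi * (mc - md : ℤ) := by push_cast; rw [sub_mul, h1, h2]; ring
  have i2 : (c + d) * P = 2 * Real.pi * (mc + md : ℤ) := by push_cast; rw [add_mul, h1, h2]; ring
  have I1 : IntervalIntegrable (fun τ => Real.cos ((c - d) * τ)) MeasureTheory.volume 0 P := by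
    apply Continuous.intervalIntegrable; fun_prop
  have I2 : IntervalIntegrable (fun τ => Real.cos ((c + d) * τ)) MeasureTheory.volume 0 P := by
    apply Continuous.intervalIntegrable; fun_prop
  rw [integral_div, integral_sub I1 I2, intcos _ _ _ i1, intcos _ _ _ i2, if_neg hcd]
  by_cases h : c = d <;> simp [h, sub_eq_zero]

/-- The quadratic objective `J(θ) = J* + ½(θ−θ*)ᵀH(θ−θ*)`. -/
def Jfun (n : ℕ) (H : Matrix (Fin n) (Fin n) ℝ) (θs : Fin n → ℝ) (Js : ℝ)
    (θ : Fin n → ℝ) : ℝ :=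
  Js + (1 / 2) * ((θ - θs) ⬝ᵥ (H *ᵥ (θ - θs)))

/-- Averaging the quadratic objective over a common period `P` of the probing
sinusoids: `(1/P)∫₀^P J(θ̃ + θ* + S(τ))dτ = J(θ̃ + θ*) + (a²/4)Tr(H)`. -/
theorem stmt13 (n : ℕ) (hn : 1 ≤ n) (a : ℝ) (ha : 0 < a)
    (ω : Fin n → ℝ) (hω : ∀ i, 0 < ω i) (hωinj : Function.Injective ω)
    (P : ℝ) (hP : 0 < P) (hper : ∀ i, ∃ m : ℕ, 0 < m ∧ ω i * P = 2 * Real.pi * m)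
    (H : Matrix (Fin n) (Fin n) ℝ) (hH : H.IsSymm)
    (θs : Fin n → ℝ) (Js : ℝ) :
    ∀ θt : Fin n → ℝ,
      (1 / P) * ∫ τ in (0 : ℝ)..P,
          Jfun n H θs Js (θt + θs + fun j => a * Real.sin (ω j * τ)) =
        Jfun n H θs Js (θt + θs) + a ^ 2 / 4 * H.trace := by
  intro θt
  choose m hm0 hm using hper
  -- expand the integrand
  have expand : (fun τ => Jfun n H θs Js (θt + θs + fun j => a * Real.sin (ω j * τ)))
      = fun τ => Js + (1/2) * ∑ i, ∑ j,
          H i j * ((θt i + a * Real.sin (ω i * τ)) * (θt j + a * Real.sin (ω j * τ))) := by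
    funext τ
    simp only [Jfun, dotProduct, mulVec, Pi.add_apply, Pi.sub_apply]
    congr 1
    congr 1
    apply Finset.sum_congr rfl
    intro i _
    rw [Finset.mul_sum]
    apply Finset.sum_congr rfl
    intro j _
    ring
  rw [expand]
  have hcont : ∀ i j : Fin n, IntervalIntegrable
      (fun τ => H i j * ((θt i + a * Real.sin (ω i * τ)) * (θt j + a * Real.sin (ω j * τ))))
      MeasureTheory.volume 0 P := by
    intro i j
    apply Continuous.intervalIntegrable
    fun_prop
  have Iij : ∀ i j : Fin n,
      (∫ τ in (0:ℝ)..P,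
        H i j * ((θt i + a * Real.sin (ω i * τ)) * (θt j + a * Real.sin (ω j * τ))))
      = H i j * (θt i * θt j) * P + (if i = j then H i j * (a^2 * (P/2)) else 0) := by
    intro i j
    have e : (fun τ => H i j * ((θt i + a * Real.sin (ω i * τ)) * (θt j + a * Real.sin (ω j * τ))))
        = fun τ => (H i j * (θt i * θt j)
            + (H i j * (a * θt i)) * Real.sin (ω j * τ))
            + ((H i j * (a * θt j)) * Real.sin (ω i * τ)
            + (H i j * a^2) * (Real.sin (ω i * τ) * Real.sin (ω j * τ))) := by
      funext τ; ring
    rw [e]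
    have c1 : IntervalIntegrable (fun τ => H i j * (θt i * θt j)
        + (H i j * (a * θt i)) * Real.sin (ω j * τ)) MeasureTheory.volume 0 P := by
      apply Continuous.intervalIntegrable; fun_prop
    have c2 : IntervalIntegrable (fun τ => (H i j * (a * θt j)) * Real.sin (ω i * τ)
        + (H i j * a^2) * (Real.sin (ω i * τ) * Real.sin (ω j * τ))) MeasureTheory.volume 0 P := by
      apply Continuous.intervalIntegrable; fun_prop
    have c3 : IntervalIntegrable (fun τ : ℝ => H i j * (θt i * θt j)) MeasureTheory.volume 0 P := by
      apply Continuous.intervalIntegrable; fun_prop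
    have c4 : IntervalIntegrable (fun τ => (H i j * (a * θt i)) * Real.sin (ω j * τ)) MeasureTheory.volume 0 P := by
      apply Continuous.intervalIntegrable; fun_prop
    have c5 : IntervalIntegrable (fun τ => (H i j * (a * θt j)) * Real.sin (ω i * τ)) MeasureTheory.volume 0 P := by
      apply Continuous.intervalIntegrable; fun_prop
    have c6 : IntervalIntegrable (fun τ => (H i j * a^2) * (Real.sin (ω i * τ) * Real.sin (ω j * τ))) MeasureTheory.volume 0 P := by
      apply Continuous.intervalIntegrable; fun_prop
    have hmi : ω i * P = 2 * Real.pi * ((m i : ℤ) : ℝ) := by push_cast; exact hm i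
    have hmj : ω j * P = 2 * Real.pi * ((m j : ℤ) : ℝ) := by push_cast; exact hm j
    rw [integral_add c1 c2, integral_add c3 c4, integral_add c5 c6,
      integral_const, integral_const_mul, integral_const_mul, integral_const_mul,
      intsin (ω i) P (hω i).ne' (m i) hmi,
      intsin (ω j) P (hω j).ne' (m j) hmj,
      intsinsin (ω i) (ω j) P (add_pos (hω i) (hω j)).ne' (m i) (m j) hmi hmj]
    simp only [hωinj.eq_iff]
    by_cases hij : i = j <;> simp [hij] <;> ring
  rw [integral_add (by apply Continuous.intervalIntegrable; fun_prop)
      (by apply Continuous.intervalIntegrable; fun_prop),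
    integral_const, integral_const_mul,
    integral_finset_sum (fun i _ => by
      apply Continuous.intervalIntegrable
      have : Continuous fun τ => ∑ j, H i j * ((θt i + a * Real.sin (ω i * τ)) * (θt j + a * Real.sin (ω j * τ))) := by
        apply continuous_finset_sum; intro j _; fun_prop
      exact this)]
  have : ∀ i : Fin n, (∫ τ in (0:ℝ)..P, ∑ j,
      H i j * ((θt i + a * Real.sin (ω i * τ)) * (θt j + a * Real.sin (ω j * τ))))
      = ∑ j, (H i j * (θt i * θt j) * P + (if i = j then H i j * (a^2 * (P/2)) else 0)) := by
    intro i
    rw [integral_finset_sum (fun j _ => hcont i j)]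
    exact Finset.sum_congr rfl fun j _ => Iij i j
  simp only [this]
  -- now pure algebra with sums
  have sum_split : ∑ i, ∑ j, (H i j * (θt i * θt j) * P + (if i = j then H i j * (a^2 * (P/2)) else 0))
      = (∑ i, θt i * ∑ j, H i j * θt j) * P + (∑ i, H i i) * (a^2 * (P/2)) := by
    rw [Finset.sum_mul, Finset.sum_mul, ← Finset.sum_add_distrib]
    apply Finset.sum_congr rfl
    intro i _
    rw [Finset.sum_add_distrib, ← Finset.sum_mul, Finset.mul_sum, Finset.sum_ite_eq Finset.univ i]
    simp only [Finset.mem_univ, if_true]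
    congr 2
    apply Finset.sum_congr rfl
    intro j _
    ring
  rw [sum_split]
  have htr : H.trace = ∑ i, H i i := by
    simp [Matrix.trace, Matrix.diag]
  have hJ : Jfun n H θs Js (θt + θs) = Js + (1/2) * ∑ i, θt i * ∑ j, H i j * θt j := by
    simp only [Jfun, dotProduct, mulVec, Pi.add_apply, Pi.sub_apply, add_sub_cancel_right]
  rw [hJ, htr, smul_eq_mul]
  field_simp
  ring
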